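/- arXiv:1405.0022 — 2 statements merged into one kernel-verified Lean document; each statement's English description precedes it below -/
import Mathlib

section
/- Every quasi-cohesive set has intrinsic density 0; that is, if Q ⊆ ℕ is a finite union of cohesive sets, then for every computable permutation π : ℕ → ℕ, the image π(Q) has asymptotic density 0. -/
open Filter

open scoped Classical

/-- The `n`-th partial density of `S ⊆ ℕ`: `|S ∩ [0,n)| / n`. -/
noncomputable def partialDensity (S : Set ℕ) (n : ℕ) : ℝ :=
  (((Finset.range n).filter (fun m => m ∈ S)).card : ℝ) / n

/-- `S` has asymptotic density `d`. -/
def HasDensity (S : Set ℕ) (d : ℝ) : Prop :=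
  Tendsto (partialDensity S) atTop (nhds d)

/-- The upper asymptotic density of `S`. -/
noncomputable def upperDensity (S : Set ℕ) : ℝ :=
  limsup (partialDensity S) atTop

/-- The lower asymptotic density of `S`. -/
noncomputable def lowerDensity (S : Set ℕ) : ℝ :=
  liminf (partialDensity S) atTop

/-- A computable permutation of `ℕ`. -/
def ComputablePerm (π : ℕ → ℕ) : Prop :=
  Function.Bijective π ∧ Computable π

/-- `A` is computably enumerable: the domain of a partial computable function. -/
def CE (A : Set ℕ) : Prop :=
  ∃ f : ℕ →. ℕ, Partrec f ∧ ∀ n, n ∈ A ↔ (f n).Dom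

/-- The principal function of `S`: `p_S n` is the least `x` with `|S ∩ [0,x)| ≥ n`. -/
noncomputable def principalFn (S : Set ℕ) (n : ℕ) : ℕ :=
  sInf {x | n ≤ ((Finset.range x).filter (fun m => m ∈ S)).card}

/-- An infinite set `C` is cohesive if every c.e. set `U` either intersects `C`
finitely or has complement intersecting `C` finitely. -/
def Cohesive (C : Set ℕ) : Prop :=
  C.Infinite ∧ ∀ U : Set ℕ, CE U → (C ∩ U).Finite ∨ (C ∩ Uᶜ).Finite

/-!
Each residue class modulo `k` is computable, so a cohesive set lies, up to finitely many
elements, in a single residue class; its partial densities are therefore eventually at most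
about `1 / k` for every `k`, and it has density `0`. Preimages of c.e. sets under computable
maps are c.e., so a computable permutation maps cohesive sets to cohesive sets, and density
`0` is preserved under finite unions.
-/

theorem REPred.ce {p : ℕ → Prop} (hp : REPred p) : CE {n | p n} :=
  ⟨fun n => (Part.assert (p n) fun _ => Part.some ()).map fun _ => 0,
    hp.map (Computable.const 0).to₂, fun _ => ⟨fun h => ⟨h, trivial⟩, fun ⟨h, _⟩ => h⟩⟩

theorem ce_setOf_modEq (k r : ℕ) : CE {n | n ≡ r [MOD k]} :=
  REPred.ce (PrimrecPred.computablePred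
    (Primrec.eq.comp (Primrec.nat_mod.comp .id (.const k)) (.const (r % k)))).to_re

theorem CE.preimage {U : Set ℕ} (hU : CE U) {f : ℕ → ℕ} (hf : Computable f) :
    CE (f ⁻¹' U) :=
  let ⟨g, hg, hgU⟩ := hU
  ⟨fun n => g (f n), hg.comp hf, fun n => hgU (f n)⟩

theorem Cohesive.image {C : Set ℕ} (hC : Cohesive C) {f : ℕ → ℕ} (hf : Computable f)
    (hinj : f.Injective) : Cohesive (f '' C) := by
  refine ⟨hC.1.image hinj.injOn, fun U hU => ?_⟩
  rw [← Set.image_inter_preimage, ← Set.image_inter_preimage, Set.preimage_compl]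
  exact (hC.2 _ (hU.preimage hf)).imp (·.image f) (·.image f)

theorem Cohesive.exists_finite_diff_modEq {C : Set ℕ} (hC : Cohesive C) {k : ℕ} (hk : 0 < k) :
    ∃ r, (C \ {n | n ≡ r [MOD k]}).Finite := by
  by_contra! h
  have hfin (r : ℕ) : (C ∩ {n | n ≡ r [MOD k]}).Finite :=
    (hC.2 _ (ce_setOf_modEq k r)).resolve_right (h r)
  refine hC.1 (((Set.finite_lt_nat k).biUnion fun r _ => hfin r).subset fun n hn => ?_)
  exact Set.mem_biUnion (Nat.mod_lt n hk) ⟨hn, (Nat.mod_modEq n k).symm⟩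

theorem partialDensity_nonneg (S : Set ℕ) (n : ℕ) : 0 ≤ partialDensity S n := by
  unfold partialDensity
  positivity

theorem partialDensity_mono {S T : Set ℕ} (h : S ⊆ T) (n : ℕ) :
    partialDensity S n ≤ partialDensity T n := by
  unfold partialDensity
  gcongr

theorem partialDensity_union_le (S T : Set ℕ) (n : ℕ) :
    partialDensity (S ∪ T) n ≤ partialDensity S n + partialDensity T n := by
  unfold partialDensity
  rw [← add_div]
  gcongr
  simp only [Set.mem_union, Finset.filter_or]
  exact_mod_cast Finset.card_union_le _ _

theorem partialDensity_iUnion_le {ι : Type*} [Fintype ι] (S : ι → Set ℕ) (n : ℕ) :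
    partialDensity (⋃ i, S i) n ≤ ∑ i, partialDensity (S i) n := by
  unfold partialDensity
  rw [← Finset.sum_div]
  gcongr
  have hsub : (Finset.range n).filter (· ∈ ⋃ i, S i) ⊆
      Finset.univ.biUnion fun i => (Finset.range n).filter (· ∈ S i) := by
    intro m
    simp
  exact_mod_cast (Finset.card_le_card hsub).trans Finset.card_biUnion_le

theorem partialDensity_finset_le (F : Finset ℕ) (n : ℕ) :
    partialDensity F n ≤ F.card / n := by
  unfold partialDensity
  gcongr
  intro m hm
  simp only [Finset.mem_filter] at hm
  exact hm.2

theorem partialDensity_modEq_le {k : ℕ} (hk : 0 < k) (r n : ℕ) :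
    partialDensity {m | m ≡ r [MOD k]} n ≤ 1 / k + 1 / n := by
  rcases n.eq_zero_or_pos with rfl | hn
  · simp [partialDensity]
  have hcount : Nat.count (· ≡ r [MOD k]) n ≤ n / k + 1 := by
    rw [Nat.count_modEq_card n hk]
    split_ifs <;> omega
  rw [Nat.count_eq_card_filter_range] at hcount
  unfold partialDensity
  calc _ ≤ ((n / k + 1 : ℕ) : ℝ) / n := by
        gcongr
        exact (Finset.card_le_card fun m hm => by simpa using hm).trans hcount
    _ ≤ (n / k + 1) / n := by
        gcongr
        push_cast
        gcongr
        exact Nat.cast_div_le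
    _ = 1 / k + 1 / n := by
        field_simp

theorem hasDensity_zero_of_eventually_le {S : Set ℕ}
    (h : ∀ ε > 0, ∀ᶠ n in atTop, partialDensity S n ≤ ε) : HasDensity S 0 :=
  tendsto_order.2 ⟨fun _ ha => .of_forall fun n => ha.trans_le (partialDensity_nonneg S n),
    fun _ ha => (h _ (half_pos ha)).mono fun _ hn => hn.trans_lt (half_lt_self ha)⟩

theorem hasDensity_iUnion_zero {ι : Type*} [Fintype ι] {S : ι → Set ℕ}
    (h : ∀ i, HasDensity (S i) 0) : HasDensity (⋃ i, S i) 0 := by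
  have hsum := tendsto_finsetSum Finset.univ fun i _ => h i
  rw [Finset.sum_const_zero] at hsum
  exact squeeze_zero (partialDensity_nonneg _) (partialDensity_iUnion_le S) hsum

theorem Cohesive.hasDensity_zero {C : Set ℕ} (hC : Cohesive C) : HasDensity C 0 := by
  refine hasDensity_zero_of_eventually_le fun ε hε => ?_
  obtain ⟨k, hk⟩ := exists_nat_one_div_lt (half_pos hε)
  obtain ⟨r, hr⟩ := hC.exists_finite_diff_modEq k.succ_pos
  set F := hr.toFinset
  have hCF : C ⊆ F ∪ {m | m ≡ r [MOD k + 1]} := by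
    rw [hr.coe_toFinset]
    exact Set.subset_sdiff_union _ _
  have hF : ∀ᶠ n : ℕ in atTop, (F.card + 1 : ℝ) / n < ε / 2 :=
    (tendsto_const_div_atTop_nhds_zero_nat _).eventually (gt_mem_nhds (half_pos hε))
  filter_upwards [hF] with n hn
  calc partialDensity C n
      ≤ partialDensity F n + partialDensity {m | m ≡ r [MOD k + 1]} n :=
        (partialDensity_mono hCF n).trans (partialDensity_union_le _ _ n)
    _ ≤ F.card / n + (1 / (k + 1 : ℕ) + 1 / n) :=
        add_le_add (partialDensity_finset_le F n) (partialDensity_modEq_le k.succ_pos r n)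
    _ = (F.card + 1) / n + 1 / (k + 1) := by push_cast; ring
    _ ≤ ε := by linarith

theorem quasiCohesive_intrinsicDensity_zero (Q : Set ℕ)
    (hQ : ∃ (n : ℕ) (C : Fin n → Set ℕ),
      (∀ i, Cohesive (C i)) ∧ Q = ⋃ i, C i) :
    ∀ π : ℕ → ℕ, ComputablePerm π → HasDensity (π '' Q) 0 := by
  rintro π ⟨hbij, hcomp⟩
  obtain ⟨n, C, hC, rfl⟩ := hQ
  rw [Set.image_iUnion]
  exact hasDensity_iUnion_zero fun i => ((hC i).image hcomp hbij.injective).hasDensity_zero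
end

section
/- Any infinite set A ⊆ ℕ with intrinsic lower density 0 is immune; that is, if A is infinite and for every computable permutation π : ℕ → ℕ the lower asymptotic density of π(A) equals 0, then A has no infinite computably enumerable subset. -/
open Filter

open scoped Classical

/-!
An infinite c.e. set `B ⊆ A` contains an infinite, coinfinite computable set `R`: enumerate `B`
and keep an increasing subsequence with gaps. Sending the `m`-th element of `R` to `2m` and the
`m`-th element of its complement to `2m + 1` is a computable permutation `π`, and `π '' A`
contains every even number, so its lower density is at least `1 / 2`.
-/

section Interleave

variable (p : ℕ → Prop) [DecidablePred p]

def interleaveRank (x : ℕ) : ℕ :=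
  if p x then 2 * Nat.count p x else 2 * Nat.count (¬p ·) x + 1

lemma interleaveRank_injective : Function.Injective (interleaveRank p) := by
  intro x y hxy
  unfold interleaveRank at hxy
  split_ifs at hxy with hx hy hy
  · exact Nat.count_injective hx hy (by omega)
  · omega
  · omega
  · exact Nat.count_injective (p := (¬p ·)) hx hy (by omega)

variable {p}

lemma interleaveRank_nth (hp : {x | p x}.Infinite) (m : ℕ) :
    interleaveRank p (Nat.nth p m) = 2 * m := by
  rw [interleaveRank, if_pos (Nat.nth_mem_of_infinite hp m), Nat.count_nth_of_infinite hp]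

lemma interleaveRank_nth_not (hp : {x | ¬p x}.Infinite) (m : ℕ) :
    interleaveRank p (Nat.nth (¬p ·) m) = 2 * m + 1 := by
  rw [interleaveRank, if_neg (Nat.nth_mem_of_infinite hp m), Nat.count_nth_of_infinite hp]

lemma interleaveRank_surjective (hp : {x | p x}.Infinite) (hnp : {x | ¬p x}.Infinite) :
    Function.Surjective (interleaveRank p) := by
  intro y
  obtain ⟨m, rfl | rfl⟩ := Nat.even_or_odd' y
  · exact ⟨_, interleaveRank_nth hp m⟩
  · exact ⟨_, interleaveRank_nth_not hnp m⟩

lemma ComputablePred.computable_count (hp : ComputablePred p) : Computable (Nat.count p) := by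
  have hp' : Computable fun q : ℕ × ℕ × ℕ => decide (p q.2.1) :=
    (computablePred_iff_computable_decide.1 hp).comp (Computable.fst.comp Computable.snd)
  have hstep : Computable₂ fun (_ : ℕ) (q : ℕ × ℕ) => q.2 + cond (decide (p q.1)) 1 0 :=
    (Primrec.nat_add.to_comp.comp (Computable.snd.comp Computable.snd)
      (hp'.cond (Computable.const 1) (Computable.const 0))).to₂
  refine (Computable.nat_rec Computable.id (Computable.const 0) hstep).of_eq fun n => ?_
  induction n with
  | zero => rfl
  | succ n ih => rw [Nat.count_succ, ← ih]; by_cases h : p n <;> simp [h]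

lemma ComputablePred.computable_interleaveRank (hp : ComputablePred p) :
    Computable (interleaveRank p) :=
  ComputablePred.ite (Primrec.nat_mul.to_comp.comp (Computable.const 2) hp.computable_count)
    (Computable.succ.comp (Primrec.nat_mul.to_comp.comp (Computable.const 2)
      hp.not.computable_count)) hp

end Interleave

open Nat.Partrec (Code)

lemma StrictMono.computablePred_mem_range {g : ℕ → ℕ} (hg : Computable g)
    (hmono : StrictMono g) : ComputablePred (· ∈ Set.range g) := by
  have hex : ∀ x, ∃ k, x ≤ g k := fun x => ⟨x, hmono.id_le x⟩
  have hfind : Computable fun x => Nat.find (hex x) :=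
    Computable.find (Primrec.nat_le.decide.to_comp.comp Computable.fst
      (hg.comp Computable.snd)).computablePred hex
  refine (Computable.computablePred (p := fun x => g (Nat.find (hex x)) = x)
    (Primrec.eq.decide.to_comp.comp (hg.comp hfind) Computable.id)).of_eq fun x => ?_
  refine ⟨fun h => ⟨_, h⟩, ?_⟩
  rintro ⟨k, rfl⟩
  exact le_antisymm (hmono.monotone (Nat.find_min' _ le_rfl)) (Nat.find_spec (hex (g k)))

lemma CE.exists_code {B : Set ℕ} (hB : CE B) :
    ∃ c : Code, ∀ n, n ∈ B ↔ ∃ k, (c.evaln k n).isSome := by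
  obtain ⟨f, hf, hfB⟩ := hB
  obtain ⟨c, rfl⟩ := Code.exists_code.1 (Partrec.nat_iff.1 hf)
  refine ⟨c, fun n => ?_⟩
  simp only [hfB, Part.dom_iff_mem, Code.evaln_complete, Option.isSome_iff_exists]
  exact ⟨fun ⟨x, k, h⟩ => ⟨k, x, h⟩, fun ⟨k, x, h⟩ => ⟨x, k, h⟩⟩

lemma CE.exists_computable_lt_mem {B : Set ℕ} (hB : CE B) (hinf : B.Infinite) :
    ∃ f : ℕ → ℕ, Computable f ∧ ∀ b, b < f b ∧ f b ∈ B := by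
  obtain ⟨c, hc⟩ := hB.exists_code
  -- search for a pair `⟪n, k⟫` with `b < n` and `n` enumerated into `B` within `k` steps
  let P (b m : ℕ) : Prop := b < m.unpair.1 ∧ (c.evaln m.unpair.2 m.unpair.1).isSome
  have hex : ∀ b, ∃ m, P b m := fun b => by
    obtain ⟨n, hnB, hbn⟩ := hinf.exists_gt b
    obtain ⟨k, hk⟩ := (hc n).1 hnB
    exact ⟨Nat.pair n k, by simpa [P] using ⟨hbn, hk⟩⟩
  have hunpair₁ : Primrec fun q : ℕ × ℕ => q.2.unpair.1 :=
    Primrec.fst.comp (Primrec.unpair.comp .snd)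
  have hunpair₂ : Primrec fun q : ℕ × ℕ => q.2.unpair.2 :=
    Primrec.snd.comp (Primrec.unpair.comp .snd)
  have hP : PrimrecPred fun q : ℕ × ℕ => P q.1 q.2 :=
    (Primrec.nat_lt.comp .fst hunpair₁).and <| Primrec.eq.comp
      (Primrec.option_isSome.comp
        (Code.primrec_evaln.comp ((hunpair₂.pair (.const c)).pair hunpair₁)))
      (.const true)
  refine ⟨fun b => (Nat.find (hex b)).unpair.1,
    Primrec.fst.to_comp.comp (Primrec.unpair.to_comp.comp (Computable.find hP.computablePred hex)),
    fun b => ?_⟩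
  obtain ⟨hlt, hmem⟩ := Nat.find_spec (hex b)
  exact ⟨hlt, (hc _).2 ⟨_, hmem⟩⟩

lemma CE.exists_computablePred_subset {B : Set ℕ} (hB : CE B) (hinf : B.Infinite) :
    ∃ p : ℕ → Prop, ComputablePred p ∧ {x | p x}.Infinite ∧ {x | ¬p x}.Infinite ∧
      {x | p x} ⊆ B := by
  obtain ⟨f, hf, hfB⟩ := hB.exists_computable_lt_mem hinf
  -- restarting the search at `g n + 1` leaves `g n + 1` out of the range, so it is coinfinite
  let g (n : ℕ) : ℕ := Nat.rec (f 0) (fun _ y => f (y + 1)) n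
  have hg : Computable g := Computable.nat_rec .id (.const (f 0))
    (hf.comp (Computable.succ.comp (Computable.snd.comp .snd))).to₂
  have hgap (n : ℕ) : g n + 1 < g (n + 1) := (hfB (g n + 1)).1
  have hmono : StrictMono g := strictMono_nat_of_lt_succ fun n => (hgap n).trans' (by omega)
  refine ⟨(· ∈ Set.range g), hmono.computablePred_mem_range hg,
    Set.infinite_range_of_injective hmono.injective, ?_, ?_⟩
  · refine Set.infinite_of_injective_forall_mem (f := fun n => g n + 1)
      (fun a b hab => hmono.injective (by simpa using hab)) fun n ⟨k, hk⟩ => ?_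
    have h₁ : n < k := hmono.lt_iff_lt.1 (by omega)
    have h₂ : k < n + 1 := hmono.lt_iff_lt.1 (by have := hgap n; omega)
    omega
  · rintro _ ⟨_ | n, rfl⟩ <;> exact (hfB _).2

lemma partialDensity_le_one (S : Set ℕ) (n : ℕ) : partialDensity S n ≤ 1 := by
  unfold partialDensity
  refine div_le_one_of_le₀ ?_ n.cast_nonneg
  exact_mod_cast (Finset.card_filter_le _ _).trans_eq (Finset.card_range n)

lemma half_le_partialDensity {S : Set ℕ} (hS : ∀ m, 2 * m ∈ S) {n : ℕ} (hn : 0 < n) :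
    1 / 2 ≤ partialDensity S n := by
  have hsub : (Finset.range ((n + 1) / 2)).image (2 * ·) ⊆
      (Finset.range n).filter (· ∈ S) := by
    simp only [Finset.subset_iff, Finset.mem_image, Finset.mem_range, Finset.mem_filter]
    rintro _ ⟨m, hm, rfl⟩
    exact ⟨by omega, hS m⟩
  have hcard : (n : ℝ) ≤ 2 * ((Finset.range n).filter (· ∈ S)).card := by
    have := Finset.card_le_card hsub
    rw [Finset.card_image_of_injective _ (mul_right_injective₀ two_ne_zero),
      Finset.card_range] at this
    exact_mod_cast (by omega : n ≤ 2 * ((Finset.range n).filter (· ∈ S)).card)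
  rw [partialDensity, le_div_iff₀ (by exact_mod_cast hn)]
  linarith

lemma half_le_lowerDensity {S : Set ℕ} (hS : ∀ m, 2 * m ∈ S) : 1 / 2 ≤ lowerDensity S :=
  le_liminf_of_le (isCoboundedUnder_ge_of_le atTop (partialDensity_le_one S))
    (eventually_atTop.2 ⟨1, fun _ hn => half_le_partialDensity hS hn⟩)

theorem ild0_immune_general (A : Set ℕ)
    (hld : ∀ π : ℕ → ℕ, ComputablePerm π → lowerDensity (π '' A) = 0) :
    ¬∃ B : Set ℕ, B ⊆ A ∧ CE B ∧ B.Infinite := by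
  rintro ⟨B, hBA, hB, hinf⟩
  obtain ⟨p, hpc, hp, hnp, hpB⟩ := hB.exists_computablePred_subset hinf
  have hπ : ComputablePerm (interleaveRank p) :=
    ⟨⟨interleaveRank_injective p, interleaveRank_surjective hp hnp⟩,
      hpc.computable_interleaveRank⟩
  have hevens (m : ℕ) : 2 * m ∈ interleaveRank p '' A :=
    ⟨_, hBA (hpB (Nat.nth_mem_of_infinite hp m)), interleaveRank_nth hp m⟩
  linarith [half_le_lowerDensity hevens, hld _ hπ]

theorem ild0_immune (A : Set ℕ) (hinf : A.Infinite)
    (hld : ∀ π : ℕ → ℕ, ComputablePerm π → lowerDensity (π '' A) = 0) :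
    ¬∃ B : Set ℕ, B ⊆ A ∧ CE B ∧ B.Infinite :=
  ild0_immune_general A hld
end
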